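/- Let n ≥ 2, let τ₁, …, τ_{n−1} be 2×2 real orthogonal matrices, and let Q' be the augmented reflection-based Laplacian on ℝ^{2n} with designated index ℓ, unit normal n̂, and unit mirror direction L̂ (with n̂·L̂ = 0). Then the kernel of Q' is exactly the one-dimensional subspace spanned by V₀ = (S₁L̂, …, SₙL̂); in particular dim ker Q' = 1. -/

import Mathlib

open Filter Topology Matrix

noncomputable section

abbrev Cfg (n : ℕ) := EuclideanSpace ℝ (Fin n × Fin 2)

/-- Multiplication of a 2×2 matrix with a planar vector. -/
def mv (M : Matrix (Fin 2) (Fin 2) ℝ) (v : EuclideanSpace ℝ (Fin 2)) :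
    EuclideanSpace ℝ (Fin 2) := WithLp.toLp 2 (M.mulVec v)

/-- Multiplication of a 2n×2n matrix with a configuration vector. -/
def mvC {n : ℕ} (M : Matrix (Fin n × Fin 2) (Fin n × Fin 2) ℝ) (v : Cfg n) : Cfg n :=
  WithLp.toLp 2 (M.mulVec v)

/-- The i-th planar component of a configuration. -/
def blk {n : ℕ} (p : Cfg n) (i : Fin n) : EuclideanSpace ℝ (Fin 2) :=
  WithLp.toLp 2 (fun a => p (i, a))

/-- The action of the matrix-weighted Laplacian Q of the path graph on vertices 0, …, n-1
(with matrix weight τ e on the edge {e, e+1}):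
(Qp)ᵢ = (pᵢ − τ_{i-1} p_{i-1}) + (pᵢ − τᵢᵀ p_{i+1}), where the first summand is omitted
for the first vertex and the second for the last. -/
def lapAct (n : ℕ) (τ : Fin (n - 1) → Matrix (Fin 2) (Fin 2) ℝ)
    (p : Fin n → EuclideanSpace ℝ (Fin 2)) (i : Fin n) : EuclideanSpace ℝ (Fin 2) :=
  (if h : 0 < (i : ℕ) then
      p i - mv (τ ⟨(i : ℕ) - 1, by have := i.isLt; omega⟩)
        (p ⟨(i : ℕ) - 1, by have := i.isLt; omega⟩)
    else 0)
  + (if h : (i : ℕ) + 1 < n then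
      p i - mv (τ ⟨(i : ℕ), by omega⟩)ᵀ (p ⟨(i : ℕ) + 1, h⟩)
    else 0)

/-- The action of the augmented reflection-based Laplacian Q', with designated index ℓ and
unit normal n̂: (Q'p)ᵢ = (Qp)ᵢ + [i = ℓ]·2(n̂·p_ℓ)n̂. -/
def lapAugAct (n : ℕ) (τ : Fin (n - 1) → Matrix (Fin 2) (Fin 2) ℝ) (ℓ : Fin n)
    (nh : EuclideanSpace ℝ (Fin 2)) (p : Fin n → EuclideanSpace ℝ (Fin 2)) (i : Fin n) :
    EuclideanSpace ℝ (Fin 2) :=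
  lapAct n τ p i + if i = ℓ then (2 * (inner ℝ nh (p ℓ) : ℝ)) • nh else 0

/-- V₀ = (S₁ L̂, …, Sₙ L̂). -/
def V0 {n : ℕ} (S : Fin n → Matrix (Fin 2) (Fin 2) ℝ) (L : EuclideanSpace ℝ (Fin 2)) : Cfg n :=
  WithLp.toLp 2 (fun (x : Fin n × Fin 2) => mv (S x.1) L x.2)

/-- Left endpoint of edge e of the path graph, as a vertex. -/
def eL {n : ℕ} (e : Fin (n - 1)) : Fin n := ⟨e, by have := e.isLt; omega⟩
/-- Right endpoint of edge e of the path graph, as a vertex. -/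
def eR {n : ℕ} (e : Fin (n - 1)) : Fin n := ⟨(e : ℕ) + 1, by have := e.isLt; omega⟩

/-! A configuration `p` lies in the kernel of `Q'` exactly when every edge defect
`pᵢ₊₁ - τᵢ pᵢ` vanishes and `n̂ · p_ℓ = 0`: away from `ℓ` the vertex equations say that a
defect vanishes iff the next one does, and the chains of equations starting at the two ends of
the path meet only at `ℓ`. Vanishing defects mean `p` is determined by `p_ℓ` through the frames
`Sᵢ`, while `n̂ · p_ℓ = 0` confines `p_ℓ` to the line spanned by `L̂`. -/

theorem iff_of_forall_iff_succ {P : ℕ → Prop} {a b : ℕ} (hab : a ≤ b)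
    (h : ∀ k, a ≤ k → k < b → (P k ↔ P (k + 1))) : P a ↔ P b := by
  induction b, hab using Nat.le_induction with
  | base => rfl
  | succ b hab ih => exact (ih fun k hk hkb => h k hk (by omega)).trans (h b hab (by omega))

theorem exists_smul_eq_of_inner_eq_zero {𝕜 E : Type*} [RCLike 𝕜] [NormedAddCommGroup E]
    [InnerProductSpace 𝕜 E] (hE : Module.finrank 𝕜 E = 2) {u w v : E} (hu : u ≠ 0) (hw : w ≠ 0)
    (huw : inner 𝕜 u w = 0) (huv : inner 𝕜 u v = 0) : ∃ c : 𝕜, c • w = v := by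
  have : Fact (Module.finrank 𝕜 E = 1 + 1) := ⟨hE⟩
  obtain ⟨c, hc⟩ := exists_smul_eq_of_finrank_eq_one
    (Submodule.finrank_orthogonal_span_singleton hu)
    (x := (⟨w, Submodule.mem_orthogonal_singleton_iff_inner_right.2 huw⟩ : (𝕜 ∙ u)ᗮ))
    (by simpa using hw) ⟨v, Submodule.mem_orthogonal_singleton_iff_inner_right.2 huv⟩
  exact ⟨c, congrArg Subtype.val hc⟩

section Planar

variable {M N : Matrix (Fin 2) (Fin 2) ℝ} {u v : EuclideanSpace ℝ (Fin 2)}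

@[simp] lemma mv_one : mv 1 v = v := by simp only [mv, one_mulVec, WithLp.toLp_ofLp]

@[simp] lemma mv_zero : mv M 0 = 0 := by
  simp only [mv, WithLp.ofLp_zero, mulVec_zero, WithLp.toLp_zero]

lemma mv_mul : mv (M * N) v = mv M (mv N v) := by
  simp only [mv, WithLp.ofLp_toLp, mulVec_mulVec]

lemma mv_sub : mv M (u - v) = mv M u - mv M v := by
  simp only [mv, WithLp.ofLp_sub, mulVec_sub, WithLp.toLp_sub]

lemma mv_smul (c : ℝ) : mv M (c • v) = c • mv M v := by
  simp only [mv, WithLp.ofLp_smul, mulVec_smul, WithLp.toLp_smul]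

lemma mv_mv_of_mul_eq_one (h : N * M = 1) : mv N (mv M v) = v := by
  rw [← mv_mul, h, mv_one]

lemma mv_inj_of_mul_eq_one (h : N * M = 1) : mv M u = mv M v ↔ u = v :=
  ⟨fun huv => by rw [← mv_mv_of_mul_eq_one (v := u) h, huv, mv_mv_of_mul_eq_one h],
    congrArg (mv M)⟩

lemma mv_eq_zero_iff_of_mul_eq_one (h : N * M = 1) : mv M v = 0 ↔ v = 0 := by
  rw [← mv_zero (M := M), mv_inj_of_mul_eq_one h, mv_zero]

end Planar

section PathLaplacian

variable {n : ℕ} {τ : Fin (n - 1) → Matrix (Fin 2) (Fin 2) ℝ}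

-- The defect of `p` on the edge `{k - 1, k}`, padded by `0` at `k = 0` and `k ≥ n`, so that
-- every vertex `i` lies between the defects `edgeDefect τ p i` and `edgeDefect τ p (i + 1)`.
variable (τ) in
def edgeDefect (p : Fin n → EuclideanSpace ℝ (Fin 2)) (k : ℕ) : EuclideanSpace ℝ (Fin 2) :=
  if h : 0 < k ∧ k < n then p ⟨k, h.2⟩ - mv (τ ⟨k - 1, by omega⟩) (p ⟨k - 1, by omega⟩) else 0

lemma lapAct_eq_edgeDefect (hτ : ∀ e, (τ e)ᵀ * τ e = 1) (p : Fin n → EuclideanSpace ℝ (Fin 2))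
    (i : Fin n) :
    lapAct n τ p i = edgeDefect τ p i -
      if h : (i : ℕ) + 1 < n then mv (τ ⟨i, by omega⟩)ᵀ (edgeDefect τ p (i + 1)) else 0 := by
  have hfirst : (if h : 0 < (i : ℕ) then p i - mv (τ ⟨(i : ℕ) - 1, by omega⟩)
      (p ⟨(i : ℕ) - 1, by omega⟩) else 0) = edgeDefect τ p i := by
    simp only [edgeDefect, i.isLt, and_true]
  have hsecond : ∀ h : (i : ℕ) + 1 < n, p i - mv (τ ⟨i, by omega⟩)ᵀ (p ⟨(i : ℕ) + 1, h⟩) =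
      -mv (τ ⟨i, by omega⟩)ᵀ (edgeDefect τ p (i + 1)) := fun h => by
    simp only [edgeDefect, h, Nat.add_sub_cancel, Nat.succ_pos, and_self, dite_true, mv_sub,
      mv_mv_of_mul_eq_one (hτ _), neg_sub]
  rw [lapAct, hfirst, sub_eq_add_neg]
  congr 1
  split_ifs with h
  · exact hsecond h
  · exact neg_zero.symm

lemma edgeDefect_eq_zero_iff_succ (hτ : ∀ e, (τ e)ᵀ * τ e = 1)
    {p : Fin n → EuclideanSpace ℝ (Fin 2)} {i : Fin n} (hi : lapAct n τ p i = 0) :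
    edgeDefect τ p i = 0 ↔ edgeDefect τ p (i + 1) = 0 := by
  rw [lapAct_eq_edgeDefect hτ, sub_eq_zero] at hi
  by_cases h : (i : ℕ) + 1 < n
  · rw [dif_pos h] at hi
    rw [hi, mv_eq_zero_iff_of_mul_eq_one (N := τ _) (mul_eq_one_comm.mp (hτ _))]
  · rw [dif_neg h] at hi
    have hnext : edgeDefect τ p (i + 1) = 0 := by simp only [edgeDefect, h, and_false, dite_false]
    simp only [hi, hnext]

lemma edgeDefect_eq_zero_of_lapAugAct (hτ : ∀ e, (τ e)ᵀ * τ e = 1) {ℓ : Fin n}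
    {nh : EuclideanSpace ℝ (Fin 2)} {p : Fin n → EuclideanSpace ℝ (Fin 2)}
    (hp : ∀ i, lapAugAct n τ ℓ nh p i = 0) (k : ℕ) : edgeDefect τ p k = 0 := by
  have step : ∀ i, i < n → i ≠ ℓ → (edgeDefect τ p i = 0 ↔ edgeDefect τ p (i + 1) = 0) :=
    fun i hi hiℓ => edgeDefect_eq_zero_iff_succ hτ (i := ⟨i, hi⟩) <| by
      simpa [lapAugAct, Fin.ext_iff, hiℓ] using hp ⟨i, hi⟩
  by_cases hkn : k < n
  swap
  · simp only [edgeDefect, hkn, and_false, dite_false]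
  rcases le_or_gt k ℓ with hkℓ | hℓk
  · refine (iff_of_forall_iff_succ (Nat.zero_le k) fun i _ hi => step i (by omega) (by omega)).1 ?_
    simp only [edgeDefect, lt_self_iff_false, false_and, dite_false]
  · refine (iff_of_forall_iff_succ hkn.le fun i hi hin => step i hin (by omega)).2 ?_
    simp only [edgeDefect, lt_self_iff_false, and_false, dite_false]

theorem lapAugAct_eq_zero_iff (hτ : ∀ e, (τ e)ᵀ * τ e = 1) {ℓ : Fin n}
    {nh : EuclideanSpace ℝ (Fin 2)} (hnh : nh ≠ 0) {p : Fin n → EuclideanSpace ℝ (Fin 2)} :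
    (∀ i, lapAugAct n τ ℓ nh p i = 0) ↔ (∀ k, edgeDefect τ p k = 0) ∧ inner ℝ nh (p ℓ) = 0 := by
  have hlap : (∀ k, edgeDefect τ p k = 0) → ∀ i, lapAct n τ p i = 0 := fun hd i => by
    simp [lapAct_eq_edgeDefect hτ, hd]
  constructor
  · intro hp
    have hd := edgeDefect_eq_zero_of_lapAugAct hτ hp
    refine ⟨hd, ?_⟩
    simpa [lapAugAct, hlap hd, hnh] using hp ℓ
  · rintro ⟨hd, hℓ⟩ i
    simp [lapAugAct, hlap hd, hℓ]

theorem eq_of_edgeDefect_eq_zero (hτ : ∀ e, (τ e)ᵀ * τ e = 1)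
    {p q : Fin n → EuclideanSpace ℝ (Fin 2)} (hp : ∀ k, edgeDefect τ p k = 0)
    (hq : ∀ k, edgeDefect τ q k = 0) (ℓ : Fin n) (hℓ : p ℓ = q ℓ) : p = q := by
  let P : ℕ → Prop := fun k => ∀ h : k < n, p ⟨k, h⟩ = q ⟨k, h⟩
  have step : ∀ k, k + 1 < n → (P k ↔ P (k + 1)) := fun k hk => by
    have hpk := hp (k + 1)
    have hqk := hq (k + 1)
    simp only [edgeDefect, hk, Nat.succ_pos, and_self, dite_true, Nat.add_sub_cancel,
      sub_eq_zero] at hpk hqk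
    simp only [P, hk, (by omega : k < n), forall_true_left, hpk, hqk,
      mv_inj_of_mul_eq_one (hτ _)]
  funext i
  rcases le_total (ℓ : ℕ) i with h | h
  · exact (iff_of_forall_iff_succ h fun k _ hk => step k (by omega)).1 (fun _ => hℓ) i.isLt
  · exact (iff_of_forall_iff_succ h fun k _ hk => step k (by omega)).2 (fun _ => hℓ) i.isLt

lemma edgeDefect_mv_eq_zero {S : Fin n → Matrix (Fin 2) (Fin 2) ℝ}
    (hS : ∀ e, S (eR e) = τ e * S (eL e)) (v : EuclideanSpace ℝ (Fin 2)) (k : ℕ) :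
    edgeDefect τ (fun i => mv (S i) v) k = 0 := by
  unfold edgeDefect
  split_ifs with h
  · have hSk := hS ⟨k - 1, by omega⟩
    simp only [eR, eL, Nat.sub_add_cancel h.1] at hSk
    dsimp only
    rw [hSk, mv_mul, sub_self]
  · rfl

end PathLaplacian

lemma frame_eR_eq_mul_eL {n : ℕ} {τ : Fin (n - 1) → Matrix (Fin 2) (Fin 2) ℝ}
    (hτ : ∀ e, (τ e)ᵀ * τ e = 1) {ℓ : Fin n} {S : Fin n → Matrix (Fin 2) (Fin 2) ℝ}
    (hSup : ∀ e : Fin (n - 1), (ℓ : ℕ) ≤ (e : ℕ) → S (eR e) = τ e * S (eL e))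
    (hSdown : ∀ e : Fin (n - 1), (e : ℕ) < (ℓ : ℕ) → S (eL e) = (τ e)ᵀ * S (eR e))
    (e : Fin (n - 1)) : S (eR e) = τ e * S (eL e) := by
  rcases lt_or_ge (e : ℕ) ℓ with h | h
  · rw [hSdown e h, ← Matrix.mul_assoc, mul_eq_one_comm.mp (hτ e), Matrix.one_mul]
  · exact hSup e h

section Configuration

variable {n : ℕ}

lemma blk_injective : Function.Injective (blk (n := n)) := fun _ _ h =>
  PiLp.ext fun x => congrArg (· x.2) (congrFun h x.1)

lemma blk_smul_V0 (S : Fin n → Matrix (Fin 2) (Fin 2) ℝ) (L : EuclideanSpace ℝ (Fin 2)) (c : ℝ) :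
    blk (c • V0 S L) = fun i => mv (S i) (c • L) := by
  funext i
  rw [mv_smul]
  rfl

lemma mvC_eq_zero_iff {Qm : Matrix (Fin n × Fin 2) (Fin n × Fin 2) ℝ}
    {F : (Fin n → EuclideanSpace ℝ (Fin 2)) → Fin n → EuclideanSpace ℝ (Fin 2)}
    (hQm : ∀ p i a, mvC Qm p (i, a) = F (blk p) i a) (p : Cfg n) :
    mvC Qm p = 0 ↔ ∀ i, F (blk p) i = 0 := by
  constructor
  · intro h i
    ext a
    rw [← hQm, h]
    rfl
  · intro h
    ext ⟨i, a⟩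
    rw [hQm, h]
    rfl

lemma ker_mulVecLin_eq_span {Qm : Matrix (Fin n × Fin 2) (Fin n × Fin 2) ℝ} {v : Cfg n}
    (h : ∀ p : Cfg n, mvC Qm p = 0 ↔ ∃ c : ℝ, p = c • v) :
    LinearMap.ker (mulVecLin Qm) = ℝ ∙ v.ofLp := by
  ext p
  rw [LinearMap.mem_ker, Submodule.mem_span_singleton, mulVecLin_apply]
  refine (WithLp.toLp_eq_zero 2).symm.trans ((h _).trans (exists_congr fun c => ?_))
  rw [eq_comm]
  exact ⟨congrArg WithLp.ofLp, fun h => by rw [← h]; rfl⟩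

end Configuration

theorem stmt3_general (n : ℕ)
    (τ : Fin (n - 1) → Matrix (Fin 2) (Fin 2) ℝ)
    (hτ : ∀ e, (τ e)ᵀ * τ e = 1)
    (ℓ : Fin n) (nh Lh : EuclideanSpace ℝ (Fin 2))
    (hnh : ‖nh‖ = 1) (hLh : ‖Lh‖ = 1) (hperp : (inner ℝ nh Lh : ℝ) = 0)
    (S : Fin n → Matrix (Fin 2) (Fin 2) ℝ)
    (hSl : S ℓ = 1)
    (hSup : ∀ e : Fin (n - 1), (ℓ : ℕ) ≤ (e : ℕ) → S (eR e) = τ e * S (eL e))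
    (hSdown : ∀ e : Fin (n - 1), (e : ℕ) < (ℓ : ℕ) → S (eL e) = (τ e)ᵀ * S (eR e))
    (Qm : Matrix (Fin n × Fin 2) (Fin n × Fin 2) ℝ)
    (hQm : ∀ (p : Cfg n) (i : Fin n) (a : Fin 2),
      mvC Qm p (i, a) = lapAugAct n τ ℓ nh (blk p) i a) :
    (∀ p : Cfg n, mvC Qm p = 0 ↔ ∃ c : ℝ, p = c • V0 S Lh) ∧
      Module.finrank ℝ (LinearMap.ker (Matrix.mulVecLin Qm)) = 1 := by
  have hS := frame_eR_eq_mul_eL hτ hSup hSdown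
  have hnh0 : nh ≠ 0 := by rintro rfl; simp at hnh
  have hLh0 : Lh ≠ 0 := by rintro rfl; simp at hLh
  have hker : ∀ p : Cfg n, mvC Qm p = 0 ↔ ∃ c : ℝ, p = c • V0 S Lh := by
    intro p
    rw [mvC_eq_zero_iff hQm, lapAugAct_eq_zero_iff hτ hnh0]
    constructor
    · rintro ⟨hd, hℓ⟩
      obtain ⟨c, hc⟩ :=
        exists_smul_eq_of_inner_eq_zero finrank_euclideanSpace_fin hnh0 hLh0 hperp hℓ
      refine ⟨c, blk_injective ?_⟩
      rw [blk_smul_V0]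
      exact eq_of_edgeDefect_eq_zero hτ hd (edgeDefect_mv_eq_zero hS _) ℓ (by rw [hSl, mv_one, hc])
    · rintro ⟨c, rfl⟩
      rw [blk_smul_V0]
      exact ⟨edgeDefect_mv_eq_zero hS _, by simp [hSl, inner_smul_right, hperp]⟩
  refine ⟨hker, ?_⟩
  rw [ker_mulVecLin_eq_span hker, finrank_span_singleton]
  intro h
  apply hLh0
  ext a
  simpa [V0, hSl] using congrFun h (ℓ, a)

/-- The kernel of the augmented reflection-based Laplacian Q' is exactly
the one-dimensional subspace spanned by V₀ = (S₁L̂, …, SₙL̂); in particular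
dim ker Q' = 1. -/
theorem stmt3 (n : ℕ) (hn : 2 ≤ n)
    (τ : Fin (n - 1) → Matrix (Fin 2) (Fin 2) ℝ)
    (hτ : ∀ e, (τ e)ᵀ * τ e = 1)
    (ℓ : Fin n) (nh Lh : EuclideanSpace ℝ (Fin 2))
    (hnh : ‖nh‖ = 1) (hLh : ‖Lh‖ = 1) (hperp : (inner ℝ nh Lh : ℝ) = 0)
    (S : Fin n → Matrix (Fin 2) (Fin 2) ℝ)
    (hSl : S ℓ = 1)
    (hSup : ∀ e : Fin (n - 1), (ℓ : ℕ) ≤ (e : ℕ) → S (eR e) = τ e * S (eL e))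
    (hSdown : ∀ e : Fin (n - 1), (e : ℕ) < (ℓ : ℕ) → S (eL e) = (τ e)ᵀ * S (eR e))
    (Qm : Matrix (Fin n × Fin 2) (Fin n × Fin 2) ℝ)
    (hQm : ∀ (p : Cfg n) (i : Fin n) (a : Fin 2),
      mvC Qm p (i, a) = lapAugAct n τ ℓ nh (blk p) i a) :
    (∀ p : Cfg n, mvC Qm p = 0 ↔ ∃ c : ℝ, p = c • V0 S Lh) ∧
      Module.finrank ℝ (LinearMap.ker (Matrix.mulVecLin Qm)) = 1 :=
  stmt3_general n τ hτ ℓ nh Lh hnh hLh hperp S hSl hSup hSdown Qm hQm
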